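/- arXiv:math/9604217 — 2 statements merged into one kernel-verified Lean document; each statement's English description precedes it below -/
import Mathlib

section
/- Let (S_α)_{α<ω₁} be a Schreier hierarchy and let N = (n_i)_{i≥1} be a strictly increasing sequence of positive integers. Then there exists a subsequence L = (ℓ_i)_{i≥1} ∈ [N] such that for every countable ordinal α and every finite set F ⊂ ℕ of indices: if {ℓ_i : i ∈ F} ∈ S_α, then {ℓ_{i+1} : i ∈ F} ∈ S_α(N). -/
open Filter

noncomputable section

/-- `c₀₀`: the finitely supported real sequences. -/
abbrev C00 : Type := ℕ →₀ ℝ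

/-- The unit vector basis of `c₀₀`. -/
def eBasis (i : ℕ) : C00 := Finsupp.single i 1

/-- `f` is a norm on `c₀₀`. -/
def IsNorm (f : C00 → ℝ) : Prop :=
  (∀ v w : C00, f (v + w) ≤ f v + f w) ∧
  (∀ (c : ℝ) (v : C00), f (c • v) = |c| * f v) ∧
  (∀ v : C00, v ≠ 0 → 0 < f v)

/-- `E < F` for finite sets of naturals: every element of `E` is smaller than
every element of `F` (vacuously true if one of them is empty). -/
def FinLt (E F : Finset ℕ) : Prop := ∀ a ∈ E, ∀ b ∈ F, a < b

/-- `min ran(v)` = the minimum of the support of `v`. -/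
def minSupp (v : C00) : ℕ := sInf {j | v j ≠ 0}

/-- `max ran(v)` = the maximum of the support of `v`. -/
def maxSupp (v : C00) : ℕ := sSup {j | v j ≠ 0}

/-- `ran(v)`: the smallest integer interval containing the support of `v`. -/
def ranSet (v : C00) : Set ℕ := Set.Icc (minSupp v) (maxSupp v)

/-- `E` is an interval of naturals. -/
def IsInterval (E : Finset ℕ) : Prop :=
  ∀ a ∈ E, ∀ b ∈ E, ∀ c : ℕ, a ≤ c → c ≤ b → c ∈ E

/-- The Schreier families `S_n`, `n ∈ ℕ`. -/
def SchreierFam : ℕ → Set (Finset ℕ)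
  | 0 => {F : Finset ℕ | F.card ≤ 1}
  | (n + 1) => {F : Finset ℕ | ∃ (k : ℕ) (Fs : Fin k → Finset ℕ),
      (∀ i, Fs i ∈ SchreierFam n) ∧
      (∀ i j : Fin k, i < j → FinLt (Fs i) (Fs j)) ∧
      (∀ i, ∀ a ∈ Fs i, k ≤ a) ∧
      F = Finset.univ.biUnion Fs}

/-- `S_ω = {F : n ≤ F and F ∈ S_n for some n}`. -/
def SchreierOmega : Set (Finset ℕ) :=
  {F : Finset ℕ | ∃ n : ℕ, (∀ a ∈ F, n ≤ a) ∧ F ∈ SchreierFam n}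

/-- The restriction `Ex` of `x` to a finite set `E`. -/
def restr (E : Finset ℕ) (v : C00) : C00 := v.filter (fun j => j ∈ E)

/-- `(E_i)` is an admissible family of (nonempty, finite) sets for the family `S`:
`E_1 < E_2 < ⋯` and `{min E_i} ∈ S`. -/
def AdmissibleSets (S : Set (Finset ℕ)) {m : ℕ} (E : Fin m → Finset ℕ) : Prop :=
  (∀ i, (E i).Nonempty) ∧
  (∀ i j : Fin m, i < j → FinLt (E i) (E j)) ∧
  (Finset.univ.image fun i => sInf ((E i : Set ℕ))) ∈ S

/-- `(E_i)` is an admissible family of (nonempty) intervals for the family `S`. -/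
def AdmissibleIntervals (S : Set (Finset ℕ)) {m : ℕ} (E : Fin m → Finset ℕ) : Prop :=
  (∀ i, (E i).Nonempty ∧ IsInterval (E i)) ∧
  (∀ i j : Fin m, i < j → FinLt (E i) (E j)) ∧
  (Finset.univ.image fun i => sInf ((E i : Set ℕ))) ∈ S

/-- `nrm` satisfies the implicit mixed Tsirelson norm equation with parameters `θ_q`
and families `Sq q` (`q ≥ 1`):
`‖x‖ = max(‖x‖_∞, sup{θ_q Σ ‖E_i x‖ : q ≥ 1, (E_i) q-admissible})`. -/
def MixedTsirelsonNormGen (θ : ℕ → ℝ) (Sq : ℕ → Set (Finset ℕ)) (nrm : C00 → ℝ) : Prop :=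
  ∀ x : C00, nrm x =
    max (sSup {r : ℝ | ∃ j : ℕ, r = |x j|})
      (sSup {r : ℝ | ∃ (q m : ℕ) (E : Fin m → Finset ℕ), 1 ≤ q ∧
        AdmissibleSets (Sq q) E ∧ r = θ q * ∑ i, nrm (restr (E i) x)})

/-- `nrm` is the norm of the mixed Tsirelson space `T(θ_n, S_n)_{n ∈ ℕ}`. -/
def MixedTsirelsonNorm (θ : ℕ → ℝ) (nrm : C00 → ℝ) : Prop :=
  MixedTsirelsonNormGen θ SchreierFam nrm

/-- `(θ_n)_{n ≥ 1}` is a regular sequence. -/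
def RegularSeq (θ : ℕ → ℝ) : Prop :=
  (∀ n : ℕ, 1 ≤ n → 0 < θ n ∧ θ n < 1) ∧
  (∀ n : ℕ, 1 ≤ n → θ (n + 1) ≤ θ n) ∧
  Tendsto θ atTop (nhds 0) ∧
  (∀ n m : ℕ, 1 ≤ n → 1 ≤ m → θ n * θ m ≤ θ (n + m))

/-- The `i`-th block `Σ_{j = m_i}^{m_{i+1} - 1} a_j x_j` of a block sequence of `(x_j)`
with coefficients `a` and breakpoints `m`. -/
def blk (x : ℕ → C00) (a : ℕ → ℝ) (m : ℕ → ℕ) (i : ℕ) : C00 :=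
  ∑ j ∈ Finset.Ico (m i) (m (i + 1)), a j • x j

/-- The minimum of the range w.r.t. `(x_j)` of the `i`-th block: the least `j` in
`[m_i, m_{i+1})` with `a_j ≠ 0`. -/
def minRangeIdx (a : ℕ → ℝ) (m : ℕ → ℕ) (i : ℕ) : ℕ :=
  sInf {j : ℕ | j ∈ Finset.Ico (m i) (m (i + 1)) ∧ a j ≠ 0}

/-- `(x_i)` is an (infinite) block sequence of `(e_i)`: nonzero and `x_1 < x_2 < ⋯`. -/
def IsBlockSeq (x : ℕ → C00) : Prop :=
  (∀ i, x i ≠ 0) ∧ ∀ i, FinLt (x i).support (x (i + 1)).support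

/-- `(z_i)` is an (infinite) block sequence of `(x_i)`. -/
def IsBlockOf (x z : ℕ → C00) : Prop :=
  ∃ (a : ℕ → ℝ) (m : ℕ → ℕ), StrictMono m ∧ (∀ i, z i = blk x a m i) ∧ ∀ i, z i ≠ 0

/-- The set of `δ ≥ 0` witnessing the `ℓ_1`-estimate for all finite block sequences of
`(x_i)` that are admissible (for the family `S`) *with respect to `(x_i)`*. -/
def deltaSetX (S : Set (Finset ℕ)) (nrm : C00 → ℝ) (x : ℕ → C00) : Set ℝ :=
  {δ : ℝ | 0 ≤ δ ∧ ∀ (n : ℕ) (a : ℕ → ℝ) (m : ℕ → ℕ), StrictMono m →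
    (∀ i < n, blk x a m i ≠ 0) →
    (Finset.range n).image (fun i => minRangeIdx a m i) ∈ S →
    δ * ∑ i ∈ Finset.range n, nrm (blk x a m i) ≤
      nrm (∑ i ∈ Finset.range n, blk x a m i)}

/-- The set of `δ ≥ 0` witnessing the `ℓ_1`-estimate for all finite block sequences of
`(x_i)` that are admissible (for the family `S`) *with respect to `(e_i)`*. -/
def deltaSetE (S : Set (Finset ℕ)) (nrm : C00 → ℝ) (x : ℕ → C00) : Set ℝ :=
  {δ : ℝ | 0 ≤ δ ∧ ∀ (n : ℕ) (a : ℕ → ℝ) (m : ℕ → ℕ), StrictMono m →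
    (∀ i < n, blk x a m i ≠ 0) →
    (Finset.range n).image (fun i => minSupp (blk x a m i)) ∈ S →
    δ * ∑ i ∈ Finset.range n, nrm (blk x a m i) ≤
      nrm (∑ i ∈ Finset.range n, blk x a m i)}

/-- `δ_α(x_i)` (α-admissibility w.r.t. `(x_i)`), for the α-th family `S`. -/
def deltaX (S : Set (Finset ℕ)) (nrm : C00 → ℝ) (x : ℕ → C00) : ℝ :=
  sSup (deltaSetX S nrm x)

/-- `δ_α((x_i),(e_i))` (α-admissibility w.r.t. `(e_i)`), for the α-th family `S`. -/
def deltaE (S : Set (Finset ℕ)) (nrm : C00 → ℝ) (x : ℕ → C00) : ℝ :=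
  sSup (deltaSetE S nrm x)

/-- `nrm'` is an equivalent norm to `nrm`. -/
def EquivNormOn (nrm nrm' : C00 → ℝ) : Prop :=
  ∃ c C : ℝ, 0 < c ∧ (∀ x, c * nrm x ≤ nrm' x) ∧ ∀ x, nrm' x ≤ C * nrm x

/-- The set whose supremum is `δ̈`(S)`(y_i)`: all values `δ_S((z_i), |·|)` where `|·|`
is an equivalent norm on `X` and `(z_i)` is a block sequence of `(y_i)`. -/
def dessSet (S : Set (Finset ℕ)) (nrm : C00 → ℝ) (y : ℕ → C00) : Set ℝ :=
  {d : ℝ | ∃ (nrm' : C00 → ℝ) (z : ℕ → C00), IsNorm nrm' ∧ EquivNormOn nrm nrm' ∧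
    IsBlockOf y z ∧ d = deltaX S nrm' z}

/-- A Schreier hierarchy `(S_α)_{α < ω₁}`. -/
structure IsSchreierHierarchy (S : Ordinal → Set (Finset ℕ)) : Prop where
  zero : S 0 = {F : Finset ℕ | F.card ≤ 1}
  succ : ∀ α : Ordinal, α < Ordinal.omega 1 →
    S (α + 1) = {F : Finset ℕ | ∃ (k : ℕ) (Fs : Fin k → Finset ℕ),
      (∀ i, Fs i ∈ S α) ∧
      (∀ i j : Fin k, i < j → FinLt (Fs i) (Fs j)) ∧
      (∀ i, ∀ a ∈ Fs i, k ≤ a) ∧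
      F = Finset.univ.biUnion Fs}
  limit : ∀ α : Ordinal, α < Ordinal.omega 1 → Order.IsSuccLimit α →
    ∃ f : ℕ → Ordinal, StrictMono f ∧ (⨆ n, f n) = α ∧
      S α = {F : Finset ℕ | ∃ n : ℕ, (∀ a ∈ F, n ≤ a) ∧ F ∈ S (f n)}

/-- `(y_i)` Δ-stabilizes `γ = (γ_α)_{α<ω₁}`. -/
def DeltaStabilizes (S : Ordinal → Set (Finset ℕ)) (nrm : C00 → ℝ)
    (y : ℕ → C00) (γ : Ordinal → ℝ) : Prop :=
  ∃ ε : ℕ → ℝ, Antitone ε ∧ Tendsto ε atTop (nhds 0) ∧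
    ∀ α : Ordinal, α < Ordinal.omega 1 → ∃ m : ℕ, ∀ n : ℕ, m ≤ n →
      ∀ z : ℕ → C00, IsBlockOf (fun i => y (i + n)) z →
        |deltaX (S α) nrm z - γ α| < ε n

/-- `(y_i)` Δ_{(e_i)}-stabilizes `γ = (γ_α)_{α<ω₁}`. -/
def DeltaStabilizesE (S : Ordinal → Set (Finset ℕ)) (nrm : C00 → ℝ)
    (y : ℕ → C00) (γ : Ordinal → ℝ) : Prop :=
  ∃ ε : ℕ → ℝ, Antitone ε ∧ Tendsto ε atTop (nhds 0) ∧
    ∀ α : Ordinal, α < Ordinal.omega 1 → ∃ m : ℕ, ∀ n : ℕ, m ≤ n →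
      ∀ z : ℕ → C00, IsBlockOf (fun i => y (i + n)) z →
        |deltaE (S α) nrm z - γ α| < ε n

/-- `(e_i)` is a basic sequence for the norm `nrm`. -/
def IsBasicE (nrm : C00 → ℝ) : Prop :=
  ∃ K : ℝ, ∀ (a : ℕ → ℝ) (m n : ℕ), m ≤ n →
    nrm (∑ i ∈ Finset.range m, a i • eBasis i) ≤
      K * nrm (∑ i ∈ Finset.range n, a i • eBasis i)

/-- The auxiliary norm `‖x‖_p` (`‖·‖_0 = ‖·‖`). -/
def pnorm (θ : ℕ → ℝ) (nrm : C00 → ℝ) (p : ℕ) (x : C00) : ℝ :=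
  if p = 0 then nrm x
  else θ p * sSup {r : ℝ | ∃ (m : ℕ) (E : Fin m → Finset ℕ),
    AdmissibleIntervals (SchreierFam p) E ∧ r = ∑ i, nrm (restr (E i) x)}

/-- The auxiliary seminorm `‖x‖_{N,p}`. -/
def nNorm (θ : ℕ → ℝ) (nrm : C00 → ℝ) (N p : ℕ) (x : C00) : ℝ :=
  sSup {r : ℝ | ∃ E : Fin N → Finset ℕ, (∀ i, IsInterval (E i)) ∧
    (∀ i j : Fin N, i < j → FinLt (E i) (E j)) ∧ (∀ i, ∀ a ∈ E i, N ≤ a) ∧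
    r = ∑ i, pnorm θ nrm p (restr (E i) x)}

/-- The auxiliary norm `‖x‖_{S_q,p}`. -/
def sNNorm (θ : ℕ → ℝ) (nrm : C00 → ℝ) (q p : ℕ) (x : C00) : ℝ :=
  sSup {r : ℝ | ∃ (m : ℕ) (E : Fin m → Finset ℕ),
    AdmissibleIntervals (SchreierFam q) E ∧ r = ∑ i, pnorm θ nrm p (restr (E i) x)}

/-!
Schreier families are spreading: if `F ∈ S_α` and each element of `F` is moved to a larger one
by an order-preserving map, the result is again in `S_α`. Choose `g` with `g` strictly increasing
and `n_{g(i)} ≤ g(i+1)`, and put `ℓ_i = n_{g(i)}`. Then `ℓ_i ↦ g(i+1)` is such a map, so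
`{ℓ_i : i ∈ F} ∈ S_α` gives `G = {g(i+1) : i ∈ F} ∈ S_α`, and `{ℓ_{i+1} : i ∈ F} = {n_j : j ∈ G}`.
-/

open Finset

def IsSpreading (A : Set (Finset ℕ)) : Prop :=
  ∀ F ∈ A, ∀ φ : ℕ → ℕ, StrictMonoOn φ F → (∀ a ∈ F, a ≤ φ a) → F.image φ ∈ A

def schreierSucc (A : Set (Finset ℕ)) : Set (Finset ℕ) :=
  {F : Finset ℕ | ∃ (k : ℕ) (Fs : Fin k → Finset ℕ),
    (∀ i, Fs i ∈ A) ∧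
    (∀ i j : Fin k, i < j → FinLt (Fs i) (Fs j)) ∧
    (∀ i, ∀ a ∈ Fs i, k ≤ a) ∧
    F = Finset.univ.biUnion Fs}

def schreierLimit (A : ℕ → Set (Finset ℕ)) : Set (Finset ℕ) :=
  {F : Finset ℕ | ∃ n : ℕ, (∀ a ∈ F, n ≤ a) ∧ F ∈ A n}

namespace IsSpreading

theorem card_le_one : IsSpreading {F : Finset ℕ | F.card ≤ 1} :=
  fun _ hF _ _ _ => card_image_le.trans hF

theorem schreierSucc {A : Set (Finset ℕ)} (hA : IsSpreading A) :
    IsSpreading (schreierSucc A) := by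
  rintro F ⟨k, Fs, hFs, hlt, hk, rfl⟩ φ hφ hle
  have hsub : ∀ i, (Fs i : Set ℕ) ⊆ ↑(univ.biUnion Fs) := fun i a ha =>
    mem_biUnion.mpr ⟨i, mem_univ i, ha⟩
  refine ⟨k, fun i => (Fs i).image φ, fun i => ?_, ?_, ?_, biUnion_image⟩
  · exact hA _ (hFs i) φ (hφ.mono (hsub i)) fun a ha => hle a (hsub i ha)
  · intro i j hij _ hφa _ hφb
    obtain ⟨a, ha, rfl⟩ := mem_image.mp hφa
    obtain ⟨b, hb, rfl⟩ := mem_image.mp hφb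
    exact hφ (hsub i ha) (hsub j hb) (hlt i j hij a ha b hb)
  · intro i _ hφa
    obtain ⟨a, ha, rfl⟩ := mem_image.mp hφa
    exact (hk i a ha).trans (hle a (hsub i ha))

theorem schreierLimit {A : ℕ → Set (Finset ℕ)} (hA : ∀ n, IsSpreading (A n)) :
    IsSpreading (schreierLimit A) := by
  rintro F ⟨n, hn, hF⟩ φ hφ hle
  refine ⟨n, fun _ hφa => ?_, hA n F hF φ hφ hle⟩
  obtain ⟨a, ha, rfl⟩ := mem_image.mp hφa
  exact (hn a ha).trans (hle a ha)

theorem image_mem_of_le {A : Set (Finset ℕ)} (hA : IsSpreading A) {u v : ℕ → ℕ}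
    (hu : StrictMono u) (hv : StrictMono v) (huv : ∀ i, u i ≤ v i) {F : Finset ℕ}
    (hF : F.image u ∈ A) : F.image v ∈ A := by
  have hinv : ∀ i, Function.invFun u (u i) = i := Function.leftInverse_invFun hu.injective
  have hφ : ∀ i, (v ∘ Function.invFun u) (u i) = v i := fun i => congrArg v (hinv i)
  have himage : (F.image u).image (v ∘ Function.invFun u) = F.image v := by
    rw [image_image]
    exact image_congr fun i _ => hφ i
  rw [← himage]
  refine hA _ hF _ ?_ ?_
  · rintro _ ha _ hb hab
    obtain ⟨i, -, rfl⟩ := mem_image.mp ha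
    obtain ⟨j, -, rfl⟩ := mem_image.mp hb
    rw [hφ, hφ]
    exact hv (hu.lt_iff_lt.mp hab)
  · intro _ ha
    obtain ⟨i, -, rfl⟩ := mem_image.mp ha
    exact (huv i).trans_eq (hφ i).symm

end IsSpreading

theorem IsSchreierHierarchy.isSpreading {S : Ordinal → Set (Finset ℕ)}
    (hS : IsSchreierHierarchy S) (α : Ordinal) (hα : α < Ordinal.omega 1) :
    IsSpreading (S α) := by
  induction α using WellFoundedLT.induction with
  | _ α IH =>
    rcases Ordinal.zero_or_succ_or_isSuccLimit α with rfl | ⟨β, rfl⟩ | hlim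
    · rw [hS.zero]
      exact IsSpreading.card_le_one
    · have hβ : β < Order.succ β := Order.lt_succ β
      rw [Order.succ_eq_add_one, hS.succ β (hβ.trans hα)]
      exact (IH β hβ (hβ.trans hα)).schreierSucc
    · obtain ⟨f, hf, hfsup, hSα⟩ := hS.limit α hα hlim
      have hfα : ∀ n, f n < α := fun n =>
        hfsup ▸ (hf n.lt_succ_self).trans_le (Ordinal.le_iSup f _)
      rw [hSα]
      exact IsSpreading.schreierLimit fun n => IH (f n) (hfα n) ((hfα n).trans hα)

def dominatingSeq (N : ℕ → ℕ) : ℕ → ℕ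
  | 0 => 0
  | i + 1 => max (dominatingSeq N i + 1) (N (dominatingSeq N i))

theorem dominatingSeq_strictMono (N : ℕ → ℕ) : StrictMono (dominatingSeq N) :=
  strictMono_nat_of_lt_succ fun _ => Nat.lt_of_lt_of_le (Nat.lt_succ_self _) (le_max_left _ _)

theorem apply_dominatingSeq_le_succ (N : ℕ → ℕ) (i : ℕ) :
    N (dominatingSeq N i) ≤ dominatingSeq N (i + 1) :=
  le_max_right _ _

theorem schreier_shift_subsequence_general
    (S : Ordinal → Set (Finset ℕ)) (hS : IsSchreierHierarchy S)
    (N : ℕ → ℕ) (hmono : StrictMono N) :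
    ∃ g : ℕ → ℕ, StrictMono g ∧
      ∀ α : Ordinal, α < Ordinal.omega 1 → ∀ F : Finset ℕ,
        F.image (fun i => N (g i)) ∈ S α →
        ∃ G ∈ S α, F.image (fun i => N (g (i + 1))) = G.image N := by
  set g := dominatingSeq N
  have hg : StrictMono g := dominatingSeq_strictMono N
  refine ⟨g, hg, fun α hα F hF => ⟨F.image fun i => g (i + 1), ?_, ?_⟩⟩
  · exact (hS.isSpreading α hα).image_mem_of_le (hmono.comp hg)
      (fun _ _ h => hg (Nat.succ_lt_succ h)) (apply_dominatingSeq_le_succ N) hF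
  · rw [image_image]
    rfl

/-- Proposition 2.3: for every strictly increasing sequence `N = (n_i)` of positive
integers there is a subsequence `L = (ℓ_i) ∈ [N]` such that for every `α < ω₁`,
`(ℓ_i)_{i ∈ F} ∈ S_α` implies `(ℓ_{i+1})_{i ∈ F} ∈ S_α(N)`. -/
theorem schreier_shift_subsequence
    (S : Ordinal → Set (Finset ℕ)) (hS : IsSchreierHierarchy S)
    (N : ℕ → ℕ) (hmono : StrictMono N) (hpos : ∀ i, 0 < N i) :
    ∃ g : ℕ → ℕ, StrictMono g ∧
      ∀ α : Ordinal, α < Ordinal.omega 1 → ∀ F : Finset ℕ,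
        F.image (fun i => N (g i)) ∈ S α →
        ∃ G ∈ S α, F.image (fun i => N (g (i + 1))) = G.image N :=
  schreier_shift_subsequence_general S hS N hmono

end
end

section
/- Let X = T(θ_n,S_n)_{n∈ℕ} be a regular mixed Tsirelson space with norm ‖·‖, and let θ = lim_n θ_n^{1/n}. Then for every ε > 0 there is an equivalent 1-unconditional norm |·| on X such that |Σ_{i=1}^n y_i| ≥ (θ − ε)·Σ_{i=1}^n |y_i| for every finite block sequence (y_i)_{i=1}^n of (e_i) with n ≤ min ran(y_1) (i.e. δ₁((X,|·|),(e_i)) ≥ θ − ε). -/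
open Filter

noncomputable section

/-!
Put `η = max (θ - ε) 0`. A Schreier tree is a finite tree whose leaves carry sets of integers,
in which the `m` children of every node have successive supports contained in `[m, ∞)`; its
value at `x` is `Σ η ^ depth(E) ‖E x‖` over its leaves `E`. The new norm is
`|x| = max (‖x‖, sup_t t.val x)`. Gluing trees for successive blocks `y_1 < ⋯ < y_n` with
`n ≤ supp y_1` under a new root with `n` children is again a Schreier tree, which gives
`|Σ y_i| ≥ η Σ |y_i|` at once; unconditionality is inherited from `‖·‖`.

For the equivalence: since `θ_N ^ (1/N) → θ > η`, there is `N` with `η ^ N < θ_N`.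
Cutting a tree at depth `N` leaves an `S_N`-admissible family made of the shallow leaves
(weight `≤ 1`) and the subtrees hanging at depth `N` (weight `η ^ N`), so induction on the depth
bounds every tree value by `K ‖x‖` with `1 + η ^ N K = θ_N K`.
-/

open Finset

theorem FinLt.mono {E F E' F' : Finset ℕ} (h : FinLt E F) (hE : E' ⊆ E) (hF : F' ⊆ F) :
    FinLt E' F' :=
  fun a ha b hb => h a (hE ha) b (hF hb)

theorem FinLt.disjoint {E F : Finset ℕ} (h : FinLt E F) : Disjoint E F :=
  disjoint_left.2 fun a ha hb => lt_irrefl a (h a ha a hb)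

theorem AdmissibleSets.pairwise_disjoint {S : Set (Finset ℕ)} {m : ℕ} {E : Fin m → Finset ℕ}
    (hE : AdmissibleSets S E) : Pairwise fun i j => Disjoint (E i) (E j) := by
  intro i j hij
  rcases lt_or_gt_of_ne hij with h | h
  · exact (hE.2.1 i j h).disjoint
  · exact (hE.2.1 j i h).disjoint.symm

theorem restr_apply (E : Finset ℕ) (v : C00) (j : ℕ) :
    restr E v j = if j ∈ E then v j else 0 :=
  Finsupp.filter_apply ..

theorem support_restr (E : Finset ℕ) (v : C00) :
    (restr E v).support = v.support.filter (· ∈ E) :=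
  Finsupp.support_filter ..

theorem restr_congr {E : Finset ℕ} {v w : C00} (h : ∀ j ∈ E, v j = w j) :
    restr E v = restr E w := by
  ext j
  simp only [restr_apply]
  split_ifs with hj
  exacts [h j hj, rfl]

theorem restr_empty (v : C00) : restr ∅ v = 0 := by
  ext j
  simp [restr_apply]

theorem restr_add (E : Finset ℕ) (v w : C00) : restr E (v + w) = restr E v + restr E w := by
  ext j
  simp only [restr_apply, Finsupp.coe_add, Pi.add_apply]
  split_ifs <;> simp

theorem restr_smul (E : Finset ℕ) (c : ℝ) (v : C00) : restr E (c • v) = c • restr E v := by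
  ext j
  simp only [restr_apply, Finsupp.coe_smul, Pi.smul_apply]
  split_ifs <;> simp

theorem restr_of_support_subset {E : Finset ℕ} {v : C00} (h : v.support ⊆ E) : restr E v = v := by
  ext j
  rw [restr_apply]
  split_ifs with hj
  · rfl
  · exact (Finsupp.notMem_support_iff.1 fun hs => hj (h hs)).symm

theorem restr_eq_zero_of_disjoint {E : Finset ℕ} {v : C00} (h : Disjoint v.support E) :
    restr E v = 0 := by
  ext j
  rw [restr_apply]
  split_ifs with hj
  · exact Finsupp.notMem_support_iff.1 (disjoint_right.1 h hj)
  · rfl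

theorem restr_inter_of_support_subset {E S : Finset ℕ} {v : C00} (h : v.support ⊆ S) :
    restr (E ∩ S) v = restr E v := by
  ext j
  simp only [restr_apply, mem_inter]
  by_cases hjS : j ∈ S
  · simp [hjS]
  · simp [hjS, Finsupp.notMem_support_iff.1 fun hs => hjS (h hs)]

theorem abs_restr_congr {v w : C00} (h : ∀ j, |v j| = |w j|) (E : Finset ℕ) (j : ℕ) :
    |restr E v j| = |restr E w j| := by
  simp only [restr_apply]
  split_ifs
  exacts [h j, rfl]

theorem support_eq_of_abs_eq {v w : C00} (h : ∀ j, |v j| = |w j|) : v.support = w.support := by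
  ext j
  rw [Finsupp.mem_support_iff, Finsupp.mem_support_iff, ← abs_ne_zero, h j, abs_ne_zero]

namespace IsNorm

variable {nrm : C00 → ℝ}

theorem map_zero (hn : IsNorm nrm) : nrm 0 = 0 := by
  simpa using hn.2.1 0 0

theorem nonneg (hn : IsNorm nrm) (v : C00) : 0 ≤ nrm v := by
  rcases eq_or_ne v 0 with rfl | hv
  · exact hn.map_zero.ge
  · exact (hn.2.2 v hv).le

theorem sum_le (hn : IsNorm nrm) {ι : Type*} (s : Finset ι) (f : ι → C00) :
    nrm (∑ i ∈ s, f i) ≤ ∑ i ∈ s, nrm (f i) :=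
  le_sum_of_subadditive nrm hn.map_zero.le hn.1 s f

theorem sum_restr_le (hn : IsNorm nrm) {m : ℕ} {E : Fin m → Finset ℕ}
    (hE : Pairwise fun i j => Disjoint (E i) (E j)) (x : C00) :
    ∑ i, nrm (restr (E i) x) ≤ ∑ j ∈ x.support, nrm (Finsupp.single j (x j)) := by
  classical
  have hdisj : ((univ : Finset (Fin m)) : Set (Fin m)).PairwiseDisjoint
      fun i => x.support.filter (· ∈ E i) :=
    fun i _ j _ hij => disjoint_filter.2 fun a _ hai haj => disjoint_left.1 (hE hij) hai haj
  calc ∑ i, nrm (restr (E i) x)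
      ≤ ∑ i, ∑ j ∈ x.support.filter (· ∈ E i), nrm (Finsupp.single j (x j)) :=
        sum_le_sum fun i _ => by rw [restr, Finsupp.filter_eq_sum]; exact hn.sum_le _ _
    _ = ∑ j ∈ univ.biUnion fun i => x.support.filter (· ∈ E i), nrm (Finsupp.single j (x j)) :=
        (sum_biUnion hdisj).symm
    _ ≤ ∑ j ∈ x.support, nrm (Finsupp.single j (x j)) :=
        sum_le_sum_of_subset_of_nonneg (biUnion_subset.2 fun i _ => filter_subset _ _)
          fun _ _ _ => hn.nonneg _

theorem sum_restr_eq_of_support_subset (hn : IsNorm nrm) {m : ℕ} {E : Fin m → Finset ℕ}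
    (hE : Pairwise fun i j => Disjoint (E i) (E j)) {v : C00} {i₀ : Fin m}
    (hv : v.support ⊆ E i₀) : ∑ i, nrm (restr (E i) v) = nrm v := by
  rw [sum_eq_single i₀ (fun i _ hi => ?_) (by simp), restr_of_support_subset hv]
  rw [restr_eq_zero_of_disjoint ((hE hi).symm.mono_left hv), hn.map_zero]

end IsNorm

namespace RegularSeq

variable {θ : ℕ → ℝ}

theorem pos (hreg : RegularSeq θ) {q : ℕ} (hq : 1 ≤ q) : 0 < θ q := (hreg.1 q hq).1

theorem lt_one (hreg : RegularSeq θ) {q : ℕ} (hq : 1 ≤ q) : θ q < 1 := (hreg.1 q hq).2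

theorem apply_le_apply_one (hreg : RegularSeq θ) {q : ℕ} (hq : 1 ≤ q) : θ q ≤ θ 1 := by
  induction q, hq using Nat.le_induction with
  | base => rfl
  | succ q hq ih => exact (hreg.2.1 q hq).trans ih

theorem exists_pow_lt (hreg : RegularSeq θ) {θl : ℝ}
    (hθl : Tendsto (fun n : ℕ => θ n ^ ((n : ℝ)⁻¹)) atTop (nhds θl)) {c : ℝ} (hc : c < θl) :
    ∃ N, 1 ≤ N ∧ max c 0 ^ N < θ N := by
  obtain ⟨N, hN, hcN⟩ := ((eventually_ge_atTop 1).and (hθl.eventually (lt_mem_nhds hc))).exists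
  have hθN := hreg.pos hN
  refine ⟨N, hN, ?_⟩
  calc max c 0 ^ N < (θ N ^ ((N : ℝ)⁻¹)) ^ N :=
        pow_lt_pow_left₀ (max_lt hcN (Real.rpow_pos_of_pos hθN _)) (le_max_right _ _) (by omega)
    _ = θ N := Real.rpow_inv_natCast_pow hθN.le (by omega)

end RegularSeq

theorem bddAbove_admissibleSums {θ : ℕ → ℝ} {nrm : C00 → ℝ} (hreg : RegularSeq θ)
    (hn : IsNorm nrm) (x : C00) :
    BddAbove {r : ℝ | ∃ (q m : ℕ) (E : Fin m → Finset ℕ), 1 ≤ q ∧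
      AdmissibleSets (SchreierFam q) E ∧ r = θ q * ∑ i, nrm (restr (E i) x)} := by
  refine ⟨∑ j ∈ x.support, nrm (Finsupp.single j (x j)), ?_⟩
  rintro r ⟨q, m, E, hq, hE, rfl⟩
  have hsum := hn.sum_restr_le hE.pairwise_disjoint x
  have hsum0 : 0 ≤ ∑ i, nrm (restr (E i) x) := sum_nonneg fun i _ => hn.nonneg _
  nlinarith [hreg.pos hq, hreg.lt_one hq]

theorem empty_mem_schreierFam : ∀ D, (∅ : Finset ℕ) ∈ SchreierFam D
  | 0 => by simp [SchreierFam]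
  | _ + 1 => ⟨0, Fin.elim0, fun i => i.elim0, fun i => i.elim0, fun i => i.elim0, by simp⟩

theorem singleton_mem_schreierFam {a : ℕ} (ha : 1 ≤ a) : ∀ D, ({a} : Finset ℕ) ∈ SchreierFam D
  | 0 => by simp [SchreierFam]
  | D + 1 => ⟨1, fun _ => {a}, fun _ => singleton_mem_schreierFam ha D,
      fun i j hij => absurd hij (Subsingleton.elim i j ▸ lt_irrefl i),
      fun _ b hb => (mem_singleton.1 hb).symm ▸ ha, by simp⟩

/-- An empty member would contribute the junk value `sInf ∅ = 0`. -/
def minima (L : List (Finset ℕ)) : Finset ℕ :=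
  (L.map fun E : Finset ℕ => sInf (E : Set ℕ)).toFinset

namespace MixedTsirelsonNorm

variable {θ : ℕ → ℝ} {nrm : C00 → ℝ}

theorem mul_sum_le (hT : MixedTsirelsonNorm θ nrm) (hreg : RegularSeq θ) (hn : IsNorm nrm)
    (x : C00) {q m : ℕ} {E : Fin m → Finset ℕ} (hq : 1 ≤ q)
    (hE : AdmissibleSets (SchreierFam q) E) :
    θ q * ∑ i, nrm (restr (E i) x) ≤ nrm x := by
  rw [hT x]
  exact le_max_of_le_right (le_csSup (bddAbove_admissibleSums hreg hn x) ⟨q, m, E, hq, hE, rfl⟩)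

theorem mul_sum_list_le (hT : MixedTsirelsonNorm θ nrm) (hreg : RegularSeq θ) (hn : IsNorm nrm)
    (x : C00) {q : ℕ} (hq : 1 ≤ q) {L : List (Finset ℕ)} (hne : ∀ E ∈ L, E.Nonempty)
    (hL : L.Pairwise FinLt) (hS : minima L ∈ SchreierFam q) :
    θ q * (L.map fun E => nrm (restr E x)).sum ≤ nrm x := by
  have hsum : (L.map fun E => nrm (restr E x)).sum = ∑ i, nrm (restr (L.get i) x) := by
    conv_lhs => rw [← List.ofFn_get L, List.map_ofFn, List.sum_ofFn]
    rfl
  have hmin : (univ.image fun i => sInf (L.get i : Set ℕ)) = minima L := by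
    ext a
    simp only [minima, mem_image, mem_univ, true_and, List.mem_toFinset, List.mem_map]
    constructor
    · rintro ⟨i, rfl⟩
      exact ⟨L.get i, L.get_mem i, rfl⟩
    · rintro ⟨E, hE, rfl⟩
      obtain ⟨i, rfl⟩ := List.get_of_mem hE
      exact ⟨i, rfl⟩
  rw [hsum]
  exact hT.mul_sum_le hreg hn x hq
    ⟨fun i => hne _ (L.get_mem i), fun i j hij => List.pairwise_iff_get.1 hL i j hij, hmin ▸ hS⟩

/-- In the norm equation for `v`, a family with a set containing `supp v` contributes at most
`θ_1 ‖v‖`; in any other family all pieces have smaller support. -/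
theorem le_max_of_abs_eq (hT : MixedTsirelsonNorm θ nrm) (hreg : RegularSeq θ) (hn : IsNorm nrm)
    {v w : C00} (h : ∀ j, |v j| = |w j|)
    (hrestr : ∀ E : Finset ℕ, ¬ v.support ⊆ E → nrm (restr E v) = nrm (restr E w)) :
    nrm v ≤ max (θ 1 * nrm v) (nrm w) := by
  refine (hT v).le.trans (max_le ?_ ?_)
  · calc sSup {r : ℝ | ∃ j, r = |v j|} = sSup {r : ℝ | ∃ j, r = |w j|} := by simp_rw [h]
      _ ≤ nrm w := (le_max_left _ _).trans (hT w).ge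
      _ ≤ _ := le_max_right _ _
  refine Real.sSup_le ?_ (le_max_of_le_right (hn.nonneg w))
  rintro r ⟨q, m, E, hq, hE, rfl⟩
  by_cases hsub : ∃ i, v.support ⊆ E i
  · obtain ⟨i, hi⟩ := hsub
    rw [hn.sum_restr_eq_of_support_subset hE.pairwise_disjoint hi]
    exact le_max_of_le_left (mul_le_mul_of_nonneg_right (hreg.apply_le_apply_one hq) (hn.nonneg v))
  · simp only [not_exists] at hsub
    rw [sum_congr rfl fun i _ => hrestr (E i) (hsub i)]
    exact le_max_of_le_right (hT.mul_sum_le hreg hn w hq hE)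

theorem congr_abs (hT : MixedTsirelsonNorm θ nrm) (hreg : RegularSeq θ) (hn : IsNorm nrm)
    {v w : C00} (h : ∀ j, |v j| = |w j|) : nrm v = nrm w := by
  suffices key : ∀ k (v w : C00), v.support.card ≤ k → (∀ j, |v j| = |w j|) → nrm v = nrm w from
    key _ v w le_rfl h
  intro k
  induction k with
  | zero =>
    intro v w hv h
    have hv0 : v = 0 := Finsupp.support_eq_empty.1 (card_eq_zero.1 (Nat.le_zero.1 hv))
    have hw0 : w = 0 := Finsupp.support_eq_empty.1 (support_eq_of_abs_eq h ▸ hv0 ▸ rfl)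
    rw [hv0, hw0]
  | succ k ih =>
    intro v w hv h
    have hsupp := support_eq_of_abs_eq h
    have hrestr : ∀ E : Finset ℕ, ¬ v.support ⊆ E → nrm (restr E v) = nrm (restr E w) := by
      intro E hE
      refine ih _ _ ?_ (abs_restr_congr h E)
      have : (restr E v).support ⊂ v.support := by
        rw [support_restr]
        exact filter_ssubset.2 (not_subset.1 hE)
      have := card_lt_card this
      omega
    have hvw := hT.le_max_of_abs_eq hreg hn h hrestr
    have hwv := hT.le_max_of_abs_eq hreg hn (fun j => (h j).symm)
      fun E hE => (hrestr E (hsupp ▸ hE)).symm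
    have hθ1 := hreg.lt_one le_rfl
    have := hn.nonneg v
    have := hn.nonneg w
    rcases le_max_iff.1 hvw with h1 | h1 <;> rcases le_max_iff.1 hwv with h2 | h2 <;> nlinarith

end MixedTsirelsonNorm

inductive SchreierTree : Type
  | leaf : Finset ℕ → SchreierTree
  | node : (m : ℕ) → (Fin m → SchreierTree) → SchreierTree

namespace SchreierTree

def support : SchreierTree → Finset ℕ
  | leaf E => E
  | node _ f => univ.biUnion fun i => (f i).support

/-- Makes the supports of the subtrees at each level an admissible family (`minima_cut_mem`);
leaves avoid `0` because `{0} ∉ S_1`. -/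
def IsAdmissible : SchreierTree → Prop
  | leaf E => ∀ a ∈ E, 1 ≤ a
  | node m f => (∀ i, (f i).IsAdmissible) ∧
      (∀ i j, i < j → FinLt (f i).support (f j).support) ∧
      ∀ i, ∀ a ∈ (f i).support, m ≤ a

/-- `Σ_E η ^ depth(E) ‖E x‖` over the leaves `E` of the tree. -/
def val (nrm : C00 → ℝ) (η : ℝ) (x : C00) : SchreierTree → ℝ
  | leaf E => nrm (restr E x)
  | node _ f => η * ∑ i, (f i).val nrm η x

def depth : SchreierTree → ℕ
  | leaf _ => 0
  | node _ f => (univ.sup fun i => (f i).depth) + 1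

def restrict (S : Finset ℕ) : SchreierTree → SchreierTree
  | leaf E => leaf (E ∩ S)
  | node m f => node m fun i => (f i).restrict S

/-- The leaves of depth `< r` together with the supports of the subtrees rooted at depth `r`,
empty sets discarded. -/
def cut : ℕ → SchreierTree → List (Finset ℕ)
  | 0, t => if t.support = ∅ then [] else [t.support]
  | _ + 1, leaf E => if E = ∅ then [] else [E]
  | r + 1, node _ f => (List.ofFn fun i => (f i).cut r).flatten

def cutSum (nrm : C00 → ℝ) (x : C00) (r : ℕ) (t : SchreierTree) : ℝ :=
  ((t.cut r).map fun E => nrm (restr E x)).sum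

instance : Nonempty {t : SchreierTree // t.IsAdmissible} :=
  ⟨⟨leaf ∅, fun _ h => absurd h (notMem_empty _)⟩⟩

variable {nrm : C00 → ℝ} {η : ℝ}

theorem support_restrict (S : Finset ℕ) (t : SchreierTree) :
    (t.restrict S).support = t.support ∩ S := by
  induction t with
  | leaf E => rfl
  | node m f ih => simp only [restrict, support, ih, biUnion_inter]

theorem IsAdmissible.restrict {t : SchreierTree} (ht : t.IsAdmissible) (S : Finset ℕ) :
    (t.restrict S).IsAdmissible := by
  induction t with
  | leaf E => exact fun a ha => ht a (mem_inter.1 ha).1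
  | node m f ih =>
    refine ⟨fun i => ih i (ht.1 i), fun i j hij => ?_, fun i a ha => ?_⟩
    · simp only [support_restrict]
      exact (ht.2.1 i j hij).mono inter_subset_left inter_subset_left
    · rw [support_restrict] at ha
      exact ht.2.2 i a (mem_inter.1 ha).1

theorem IsAdmissible.one_le {t : SchreierTree} (ht : t.IsAdmissible) {a : ℕ}
    (ha : a ∈ t.support) : 1 ≤ a := by
  induction t with
  | leaf E => exact ht a ha
  | node m f ih =>
    obtain ⟨i, -, hi⟩ := mem_biUnion.1 ha
    exact ih i (ht.1 i) hi

theorem val_congr {t : SchreierTree} {x y : C00} (h : ∀ j ∈ t.support, x j = y j) :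
    t.val nrm η x = t.val nrm η y := by
  induction t with
  | leaf E => exact congrArg nrm (restr_congr h)
  | node m f ih =>
    refine congrArg (η * ·) (sum_congr rfl fun i _ => ih i fun j hj => h j ?_)
    exact mem_biUnion.2 ⟨i, mem_univ i, hj⟩

theorem val_restrict {S : Finset ℕ} {x : C00} (hx : x.support ⊆ S) (t : SchreierTree) :
    (t.restrict S).val nrm η x = t.val nrm η x := by
  induction t with
  | leaf E => exact congrArg nrm (restr_inter_of_support_subset hx)
  | node m f ih => exact congrArg (η * ·) (sum_congr rfl fun i _ => ih i)

theorem val_add_le (hn : IsNorm nrm) (hη : 0 ≤ η) (x y : C00) (t : SchreierTree) :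
    t.val nrm η (x + y) ≤ t.val nrm η x + t.val nrm η y := by
  induction t with
  | leaf E => simpa only [val, restr_add] using hn.1 _ _
  | node m f ih =>
    simp only [val]
    rw [← mul_add, ← sum_add_distrib]
    exact mul_le_mul_of_nonneg_left (sum_le_sum fun i _ => ih i) hη

theorem val_smul (hn : IsNorm nrm) (c : ℝ) (x : C00) (t : SchreierTree) :
    t.val nrm η (c • x) = |c| * t.val nrm η x := by
  induction t with
  | leaf E => simpa only [val, restr_smul] using hn.2.1 c _
  | node m f ih =>
    simp only [val, ih, ← mul_sum]
    ring

theorem val_congr_abs (hu : ∀ v w : C00, (∀ j, |v j| = |w j|) → nrm v = nrm w) {x y : C00}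
    (h : ∀ j, |x j| = |y j|) (t : SchreierTree) : t.val nrm η x = t.val nrm η y := by
  induction t with
  | leaf E => exact hu _ _ (abs_restr_congr h E)
  | node m f ih => exact congrArg (η * ·) (sum_congr rfl fun i _ => ih i)

theorem mem_cut {r : ℕ} {t : SchreierTree} {E : Finset ℕ} (hE : E ∈ t.cut r) :
    E.Nonempty ∧ E ⊆ t.support := by
  have hsingle : ∀ {F : Finset ℕ}, E ∈ (if F = ∅ then [] else [F]) → E.Nonempty ∧ E ⊆ F := by
    intro F hF
    split_ifs at hF with h
    · simp at hF
    · rw [List.mem_singleton.1 hF]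
      exact ⟨nonempty_iff_ne_empty.2 h, subset_rfl⟩
  induction t generalizing r with
  | leaf F => cases r <;> exact hsingle hE
  | node m f ih =>
    cases r with
    | zero => exact hsingle hE
    | succ r =>
      simp only [cut, List.mem_flatten, List.mem_ofFn] at hE
      obtain ⟨_, ⟨i, rfl⟩, hi⟩ := hE
      obtain ⟨hne, hsub⟩ := ih i hi
      exact ⟨hne, hsub.trans (subset_biUnion_of_mem (fun i => (f i).support) (mem_univ i))⟩

theorem mem_support_of_mem_minima_cut {r : ℕ} {t : SchreierTree} {a : ℕ}
    (ha : a ∈ minima (t.cut r)) : a ∈ t.support := by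
  simp only [minima, List.mem_toFinset, List.mem_map] at ha
  obtain ⟨E, hE, rfl⟩ := ha
  obtain ⟨hne, hsub⟩ := mem_cut hE
  exact hsub (Nat.sInf_mem (coe_nonempty.2 hne))

theorem IsAdmissible.pairwise_cut {t : SchreierTree} (ht : t.IsAdmissible) (r : ℕ) :
    (t.cut r).Pairwise FinLt := by
  have hsingle : ∀ F : Finset ℕ, (if F = ∅ then [] else [F]).Pairwise FinLt := by
    intro F
    split_ifs <;> simp
  induction t generalizing r with
  | leaf F => cases r <;> exact hsingle F
  | node m f ih =>
    cases r with
    | zero => exact hsingle _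
    | succ r =>
      refine List.pairwise_flatten.2 ⟨?_, List.pairwise_ofFn.2 fun i j hij E hE F hF => ?_⟩
      · simp only [List.mem_ofFn]
        rintro _ ⟨i, rfl⟩
        exact ih i (ht.1 i) r
      · exact (ht.2.1 i j hij).mono (mem_cut hE).2 (mem_cut hF).2

theorem IsAdmissible.minima_cut_mem {t : SchreierTree} (ht : t.IsAdmissible) (r : ℕ) :
    minima (t.cut r) ∈ SchreierFam r := by
  have hsingle : ∀ {D : ℕ} (F : Finset ℕ), (∀ a ∈ F, 1 ≤ a) →
      minima (if F = ∅ then [] else [F]) ∈ SchreierFam D := by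
    intro D F hF
    split_ifs with h
    · exact empty_mem_schreierFam D
    · simpa [minima] using singleton_mem_schreierFam
        (hF _ (Nat.sInf_mem (coe_nonempty.2 (nonempty_iff_ne_empty.2 h)))) D
  induction t generalizing r with
  | leaf F => cases r <;> exact hsingle F ht
  | node m f ih =>
    cases r with
    | zero => exact hsingle _ fun a => ht.one_le
    | succ r =>
      have hunion : minima ((node m f).cut (r + 1)) =
          univ.biUnion fun i => minima ((f i).cut r) := by
        ext a
        simp [minima, cut]
      refine ⟨m, fun i => minima ((f i).cut r), fun i => ih i (ht.1 i) r,
        fun i j hij => ?_, fun i a ha => ht.2.2 i a (mem_support_of_mem_minima_cut ha), hunion⟩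
      exact (ht.2.1 i j hij).mono (fun a => mem_support_of_mem_minima_cut)
        (fun a => mem_support_of_mem_minima_cut)

theorem cutSum_ite (hn : IsNorm nrm) (x : C00) (F : Finset ℕ) :
    (((if F = ∅ then [] else [F]) : List (Finset ℕ)).map fun E => nrm (restr E x)).sum =
      nrm (restr F x) := by
  split_ifs with h
  · simp [h, restr_empty, hn.map_zero]
  · simp

theorem cutSum_zero (hn : IsNorm nrm) (x : C00) (t : SchreierTree) :
    t.cutSum nrm x 0 = nrm (restr t.support x) :=
  cutSum_ite hn x _

theorem cutSum_leaf (hn : IsNorm nrm) (x : C00) (r : ℕ) (E : Finset ℕ) :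
    (leaf E).cutSum nrm x r = nrm (restr E x) := by
  cases r <;> exact cutSum_ite hn x _

theorem cutSum_node (x : C00) (r m : ℕ) (f : Fin m → SchreierTree) :
    (node m f).cutSum nrm x (r + 1) = ∑ i, (f i).cutSum nrm x r := by
  simp [cutSum, cut, List.map_flatten, List.sum_flatten, List.map_ofFn, List.sum_ofFn]

theorem cutSum_nonneg (hn : IsNorm nrm) (x : C00) (r : ℕ) (t : SchreierTree) :
    0 ≤ t.cutSum nrm x r :=
  List.sum_nonneg fun _ h => by
    obtain ⟨E, -, rfl⟩ := List.mem_map.1 h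
    exact hn.nonneg _

theorem depth_lt_of_child {m : ℕ} (f : Fin m → SchreierTree) (i : Fin m) :
    (f i).depth < (node m f).depth :=
  Nat.lt_succ_of_le (le_sup (f := fun i => (f i).depth) (mem_univ i))

/-- In the cut at level `r`, the leaves have weight `η ^ depth ≤ 1` and the subtrees have
weight `η ^ r` and depth `< D`. -/
theorem val_le_cutSum (hn : IsNorm nrm) (hη0 : 0 ≤ η) (hη1 : η ≤ 1) {K : ℝ} (hK : 0 ≤ K)
    {D : ℕ} (hD : ∀ s : SchreierTree, s.IsAdmissible → s.depth < D →
      ∀ y, s.val nrm η y ≤ K * nrm y) (x : C00) :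
    ∀ (r : ℕ) (t : SchreierTree), t.IsAdmissible → t.depth < D + r →
      t.val nrm η x ≤ (1 + η ^ r * K) * t.cutSum nrm x r
  | 0, t, ht, hdep => by
    have hrestr : t.val nrm η x = t.val nrm η (restr t.support x) :=
      val_congr fun j hj => by rw [restr_apply, if_pos hj]
    rw [hrestr, cutSum_zero hn, pow_zero, one_mul]
    exact (hD t ht hdep _).trans
      (mul_le_mul_of_nonneg_right (le_add_of_nonneg_left zero_le_one) (hn.nonneg _))
  | r + 1, leaf E, _, _ => by
    rw [cutSum_leaf hn]
    exact le_mul_of_one_le_left (hn.nonneg _)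
      (le_add_of_nonneg_right (mul_nonneg (pow_nonneg hη0 _) hK))
  | r + 1, node m f, ht, hdep => by
    have hchild : ∀ i, (f i).val nrm η x ≤ (1 + η ^ r * K) * (f i).cutSum nrm x r := fun i =>
      val_le_cutSum hn hη0 hη1 hK hD x r (f i) (ht.1 i) (by have := depth_lt_of_child f i; omega)
    calc (node m f).val nrm η x = η * ∑ i, (f i).val nrm η x := rfl
      _ ≤ η * ∑ i, (1 + η ^ r * K) * (f i).cutSum nrm x r :=
          mul_le_mul_of_nonneg_left (sum_le_sum fun i _ => hchild i) hη0
      _ = (η + η ^ (r + 1) * K) * (node m f).cutSum nrm x (r + 1) := by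
          rw [cutSum_node, ← mul_sum]
          ring
      _ ≤ (1 + η ^ (r + 1) * K) * (node m f).cutSum nrm x (r + 1) :=
          mul_le_mul_of_nonneg_right (by linarith) (cutSum_nonneg hn x _ _)

/-- With `1 + η ^ N K = θ_N K`, `val_le_cutSum` at level `N` and the `S_N`-admissibility of the
cut carry the bound `K ‖·‖` from depth `< D` to depth `< D + 1`. -/
theorem val_le_of_pow_lt {θ : ℕ → ℝ} (hreg : RegularSeq θ) (hn : IsNorm nrm)
    (hT : MixedTsirelsonNorm θ nrm) {N : ℕ} (hN : 1 ≤ N) (hη0 : 0 ≤ η) (hηN : η ^ N < θ N)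
    {t : SchreierTree} (ht : t.IsAdmissible) (x : C00) :
    t.val nrm η x ≤ (θ N - η ^ N)⁻¹ * nrm x := by
  set K := (θ N - η ^ N)⁻¹
  have hK : 0 < K := inv_pos.2 (sub_pos.2 hηN)
  have hKθ : 1 + η ^ N * K = θ N * K := by
    have : (θ N - η ^ N) * K = 1 := mul_inv_cancel₀ (sub_pos.2 hηN).ne'
    linarith
  have hη1 : η ≤ 1 :=
    ((pow_lt_one_iff_of_nonneg hη0 (by omega)).1 (hηN.trans (hreg.lt_one hN))).le
  suffices key : ∀ D, ∀ s : SchreierTree, s.IsAdmissible → s.depth < D →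
      ∀ y, s.val nrm η y ≤ K * nrm y from key _ t ht (Nat.lt_succ_self _) x
  intro D
  induction D with
  | zero => exact fun s _ h => absurd h (Nat.not_lt_zero _)
  | succ D ih =>
    intro s hs hdep y
    calc s.val nrm η y ≤ (1 + η ^ N * K) * s.cutSum nrm y N :=
          val_le_cutSum hn hη0 hη1 hK.le ih y N s hs (by omega)
      _ = K * (θ N * s.cutSum nrm y N) := by rw [hKθ]; ring
      _ ≤ K * nrm y := mul_le_mul_of_nonneg_left (hT.mul_sum_list_le hreg hn y hN
          (fun _ hE => (mem_cut hE).1) (hs.pairwise_cut N) (hs.minima_cut_mem N)) hK.le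

end SchreierTree

theorem sum_ciSup_le_of_forall {ι α : Type*} [Fintype ι] [Nonempty α] {f : ι → α → ℝ} {C : ℝ}
    (h : ∀ t : ι → α, ∑ i, f i (t i) ≤ C) : ∑ i, ⨆ a, f i a ≤ C := by
  refine le_of_forall_pos_le_add fun δ hδ => ?_
  set δ' := δ / (Fintype.card ι + 1)
  have hδ' : 0 < δ' := by positivity
  have hcard : Fintype.card ι * δ' ≤ δ := by
    rw [mul_div_assoc', div_le_iff₀ (by positivity)]
    nlinarith
  choose t ht using fun i => exists_lt_of_lt_ciSup (sub_lt_self (⨆ a, f i a) hδ')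
  calc ∑ i, ⨆ a, f i a ≤ ∑ i, (f i (t i) + δ') := sum_le_sum fun i _ => by linarith [ht i]
    _ = ∑ i, f i (t i) + Fintype.card ι * δ' := by
        rw [sum_add_distrib, sum_const, card_univ, nsmul_eq_mul]
    _ ≤ C + δ := add_le_add (h t) hcard

theorem sum_apply_of_mem_support {n : ℕ} {v : ℕ → C00}
    (hord : ∀ i j : ℕ, i < j → j < n → FinLt (v i).support (v j).support) {i j : ℕ}
    (hi : i < n) (hj : j ∈ (v i).support) : (∑ k ∈ range n, v k) j = v i j := by
  rw [Finsupp.finsetSum_apply, sum_eq_single_of_mem i (mem_range.2 hi)]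
  intro k hk hki
  refine Finsupp.notMem_support_iff.1 fun hjk => ?_
  rcases lt_or_gt_of_ne hki with h | h
  · exact lt_irrefl j (hord k i h hi j hjk j hj)
  · exact lt_irrefl j (hord i k h (mem_range.1 hk) j hj j hjk)

theorem le_of_mem_support_of_le_minSupp {n : ℕ} {v : ℕ → C00} (hv : ∀ i < n, v i ≠ 0)
    (hord : ∀ i j : ℕ, i < j → j < n → FinLt (v i).support (v j).support)
    (hmin : 0 < n → n ≤ minSupp (v 0)) {i : ℕ} (hi : i < n) {a : ℕ} (ha : a ∈ (v i).support) :
    n ≤ a := by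
  have h0 : ∀ b ∈ (v 0).support, n ≤ b := fun b hb =>
    (hmin (by omega)).trans (Nat.sInf_le (Finsupp.mem_support_iff.1 hb))
  rcases Nat.eq_zero_or_pos i with rfl | hi0
  · exact h0 a ha
  · obtain ⟨b, hb⟩ := Finsupp.support_nonempty_iff.2 (hv 0 (by omega))
    exact (h0 b hb).trans (hord 0 i hi0 hi b hb a ha).le

def treeNorm (nrm : C00 → ℝ) (η : ℝ) (x : C00) : ℝ :=
  ⨆ t : {t : SchreierTree // t.IsAdmissible}, t.1.val nrm η x

/-- Leaves avoid `0`, so `treeNorm` alone need not dominate `‖x‖`. -/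
def renorm (nrm : C00 → ℝ) (η : ℝ) (x : C00) : ℝ :=
  max (nrm x) (treeNorm nrm η x)

section Renorm

open SchreierTree

variable {nrm : C00 → ℝ} {η K : ℝ}

theorem val_le_treeNorm
    (hK : ∀ t : SchreierTree, t.IsAdmissible → ∀ x, t.val nrm η x ≤ K * nrm x)
    {t : SchreierTree} (ht : t.IsAdmissible) (x : C00) : t.val nrm η x ≤ treeNorm nrm η x :=
  le_ciSup (f := fun s : {s : SchreierTree // s.IsAdmissible} => s.1.val nrm η x)
    ⟨K * nrm x, by rintro _ ⟨s, rfl⟩; exact hK s.1 s.2 x⟩ ⟨t, ht⟩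

theorem treeNorm_le
    (hK : ∀ t : SchreierTree, t.IsAdmissible → ∀ x, t.val nrm η x ≤ K * nrm x) (x : C00) :
    treeNorm nrm η x ≤ K * nrm x :=
  ciSup_le fun t => hK t.1 t.2 x

theorem treeNorm_add_le (hn : IsNorm nrm) (hη : 0 ≤ η)
    (hK : ∀ t : SchreierTree, t.IsAdmissible → ∀ x, t.val nrm η x ≤ K * nrm x) (x y : C00) :
    treeNorm nrm η (x + y) ≤ treeNorm nrm η x + treeNorm nrm η y :=
  ciSup_le fun t => (val_add_le hn hη x y t.1).trans
    (add_le_add (val_le_treeNorm hK t.2 x) (val_le_treeNorm hK t.2 y))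

theorem treeNorm_smul (hn : IsNorm nrm) (c : ℝ) (x : C00) :
    treeNorm nrm η (c • x) = |c| * treeNorm nrm η x := by
  simp only [treeNorm, val_smul hn, Real.mul_iSup_of_nonneg (abs_nonneg c)]

theorem treeNorm_congr_abs (hu : ∀ v w : C00, (∀ j, |v j| = |w j|) → nrm v = nrm w)
    {v w : C00} (h : ∀ j, |v j| = |w j|) : treeNorm nrm η v = treeNorm nrm η w := by
  simp only [treeNorm, val_congr_abs hu h]

theorem le_treeNorm
    (hK : ∀ t : SchreierTree, t.IsAdmissible → ∀ x, t.val nrm η x ≤ K * nrm x) {x : C00}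
    (hx : ∀ a ∈ x.support, 1 ≤ a) : nrm x ≤ treeNorm nrm η x := by
  simpa [SchreierTree.val, restr_of_support_subset subset_rfl] using
    val_le_treeNorm hK (t := leaf x.support) hx x

/-- The trees of the blocks `v i`, restricted to their supports, are glued under a root with
`n` children; this is admissible because the blocks are successive and supported in `[n, ∞)`. -/
theorem mul_sum_treeNorm_le (hη : 0 ≤ η)
    (hK : ∀ t : SchreierTree, t.IsAdmissible → ∀ x, t.val nrm η x ≤ K * nrm x)
    {n : ℕ} {v : ℕ → C00} (hord : ∀ i j : ℕ, i < j → j < n → FinLt (v i).support (v j).support)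
    (hge : ∀ i < n, ∀ a ∈ (v i).support, n ≤ a) :
    η * ∑ i ∈ range n, treeNorm nrm η (v i) ≤ treeNorm nrm η (∑ i ∈ range n, v i) := by
  rw [← Fin.sum_univ_eq_sum_range (fun i => treeNorm nrm η (v i)), mul_sum]
  simp only [treeNorm, Real.mul_iSup_of_nonneg hη]
  refine sum_ciSup_le_of_forall fun t => ?_
  set T := node n fun i => (t i).1.restrict (v i).support
  have hT : T.IsAdmissible := by
    refine ⟨fun i => (t i).2.restrict _, fun i j hij => ?_, fun i a ha => ?_⟩
    · simp only [support_restrict]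
      exact (hord i j hij j.2).mono inter_subset_right inter_subset_right
    · rw [support_restrict] at ha
      exact hge i i.2 a (mem_inter.1 ha).2
  have hval : T.val nrm η (∑ i ∈ range n, v i) = ∑ i, η * (t i).1.val nrm η (v i) := by
    rw [← mul_sum]
    refine congrArg (η * ·) (sum_congr rfl fun i _ => ?_)
    rw [val_congr (fun j hj => ?_), val_restrict subset_rfl]
    rw [support_restrict] at hj
    exact sum_apply_of_mem_support hord i.2 (mem_inter.1 hj).2
  rw [← hval]
  exact val_le_treeNorm hK hT _

theorem isNorm_renorm (hn : IsNorm nrm) (hη : 0 ≤ η)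
    (hK : ∀ t : SchreierTree, t.IsAdmissible → ∀ x, t.val nrm η x ≤ K * nrm x) :
    IsNorm (renorm nrm η) :=
  ⟨fun v w => max_le ((hn.1 v w).trans (add_le_add (le_max_left _ _) (le_max_left _ _)))
      ((treeNorm_add_le hn hη hK v w).trans (add_le_add (le_max_right _ _) (le_max_right _ _))),
    fun c v => by
      simp only [renorm, hn.2.1, treeNorm_smul hn, mul_max_of_nonneg _ _ (abs_nonneg c)],
    fun v hv => (hn.2.2 v hv).trans_le (le_max_left _ _)⟩

theorem equivNormOn_renorm (hn : IsNorm nrm)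
    (hK : ∀ t : SchreierTree, t.IsAdmissible → ∀ x, t.val nrm η x ≤ K * nrm x) :
    EquivNormOn nrm (renorm nrm η) := by
  refine ⟨1, max 1 K, one_pos, fun x => (one_mul (nrm x)).trans_le (le_max_left _ _), fun x => ?_⟩
  rw [max_mul_of_nonneg _ _ (hn.nonneg x), one_mul]
  exact max_le_max le_rfl (treeNorm_le hK x)

theorem renorm_congr_abs (hu : ∀ v w : C00, (∀ j, |v j| = |w j|) → nrm v = nrm w)
    {v w : C00} (h : ∀ j, |v j| = |w j|) : renorm nrm η v = renorm nrm η w := by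
  simp only [renorm, hu v w h, treeNorm_congr_abs hu h]

theorem mul_sum_renorm_le (hη : 0 ≤ η)
    (hK : ∀ t : SchreierTree, t.IsAdmissible → ∀ x, t.val nrm η x ≤ K * nrm x)
    {n : ℕ} {v : ℕ → C00} (hv : ∀ i < n, v i ≠ 0)
    (hord : ∀ i j : ℕ, i < j → j < n → FinLt (v i).support (v j).support)
    (hmin : 0 < n → n ≤ minSupp (v 0)) :
    η * ∑ i ∈ range n, renorm nrm η (v i) ≤ renorm nrm η (∑ i ∈ range n, v i) := by
  have hge := fun i (hi : i < n) a => le_of_mem_support_of_le_minSupp hv hord hmin hi (a := a)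
  have hblock : ∀ i ∈ range n, renorm nrm η (v i) = treeNorm nrm η (v i) := fun i hi =>
    max_eq_right (le_treeNorm hK fun a ha => by
      have := mem_range.1 hi
      have := hge i this a ha
      omega)
  rw [sum_congr rfl hblock]
  exact (mul_sum_treeNorm_le hη hK hord hge).trans (le_max_right _ _)

end Renorm

/-- Proposition 4.3: for every `ε > 0` there is an equivalent 1-unconditional norm
`|·|` on `X = T(θ_n,S_n)` with `δ₁((X,|·|),(e_i)) ≥ θ - ε`. -/
theorem exists_equiv_unconditional_norm_delta_one
    (θ : ℕ → ℝ) (hreg : RegularSeq θ)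
    (nrm : C00 → ℝ) (hn : IsNorm nrm) (hT : MixedTsirelsonNorm θ nrm)
    (θl : ℝ) (hθl : Tendsto (fun n : ℕ => θ n ^ ((n : ℝ)⁻¹)) atTop (nhds θl))
    (ε : ℝ) (hε : 0 < ε) :
    ∃ nrm' : C00 → ℝ, IsNorm nrm' ∧ EquivNormOn nrm nrm' ∧
      (∀ v w : C00, (∀ i, |v i| = |w i|) → nrm' v = nrm' w) ∧
      ∀ (n : ℕ) (v : ℕ → C00),
        (∀ i < n, v i ≠ 0) →
        (∀ i j : ℕ, i < j → j < n → FinLt (v i).support (v j).support) →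
        (0 < n → n ≤ minSupp (v 0)) →
        (θl - ε) * ∑ i ∈ Finset.range n, nrm' (v i) ≤
          nrm' (∑ i ∈ Finset.range n, v i) := by
  obtain ⟨N, hN, hηN⟩ := hreg.exists_pow_lt hθl (sub_lt_self θl hε)
  set η := max (θl - ε) 0
  have hη : 0 ≤ η := le_max_right _ _
  have hK := fun t (ht : SchreierTree.IsAdmissible t) =>
    SchreierTree.val_le_of_pow_lt hreg hn hT hN hη hηN ht
  refine ⟨renorm nrm η, isNorm_renorm hn hη hK, equivNormOn_renorm hn hK,
    fun v w => renorm_congr_abs fun v w => hT.congr_abs hreg hn,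
    fun n v hv hord hmin => ?_⟩
  have hsum : 0 ≤ ∑ i ∈ range n, renorm nrm η (v i) :=
    sum_nonneg fun i _ => (hn.nonneg _).trans (le_max_left _ _)
  exact (mul_le_mul_of_nonneg_right (le_max_left _ _) hsum).trans
    (mul_sum_renorm_le hη hK hv hord hmin)

end
end
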